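/- Let A be an m×m complex matrix that is asymptotically stable, Q an m×m Hermitian complex matrix, P = P(Q,A) the integral solution of the Lyapunov equation A·P + P·A† + Q = 0, and let Ξ be any m×m Hermitian complex matrix. If the Hermitian matrix Q_[Ξ] := Q − Ξ·A† − A·Ξ is positive semidefinite, then P + Ξ is positive semidefinite. -/

import Mathlib

/-!
Write `F_R(t) = exp(tA) R exp(tA)ᴴ`. The product rule gives `F_R' = F_{AR + RAᴴ}`. The spectrum
of `A` lies in `Re < -ε` for some `ε > 0`, and on the generalized eigenspace of an eigenvalue `μ`
the flow `exp(tA)` is `e^{tμ}` times a polynomial in `t`; so `exp(tA) = O(e^{-εt})`, and `F_R` is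
integrable on `(0, ∞)` and tends to `0`. Integrating `F_Ξ'` gives `∫₀^∞ F_{AΞ + ΞAᴴ} = -Ξ`, hence
`P(Q,A) + Ξ = ∫₀^∞ F_{Q_[Ξ]}`, an integral of the positive semidefinite matrices
`exp(tA) Q_[Ξ] exp(tA)ᴴ`; the positive semidefinite cone is closed, so the integral is in it.
-/

open MeasureTheory NormedSpace Matrix
open scoped ComplexOrder

attribute [local instance] Matrix.normedAddCommGroup Matrix.normedSpace

/-- A square complex matrix is asymptotically stable if every eigenvalue has
strictly negative real part. -/
def IsAsymptoticallyStable {m : ℕ} (A : Matrix (Fin m) (Fin m) ℂ) : Prop :=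
  ∀ μ ∈ spectrum ℂ A, μ.re < 0

/-- The integral solution `P(Q,A) = ∫₀^∞ exp(tA) Q exp(tA)ᴴ dt` of the Lyapunov
equation `A P + P Aᴴ + Q = 0`. -/
noncomputable def lyapunovSolution {m : ℕ} (Q A : Matrix (Fin m) (Fin m) ℂ) :
    Matrix (Fin m) (Fin m) ℂ :=
  ∫ t in Set.Ici (0 : ℝ), exp (t • A) * Q * (exp (t • A))ᴴ

open Asymptotics Filter Set Topology
open scoped Nat

theorem integrableOn_Ioi_of_isBigO_exp_neg {E : Type*} [NormedAddCommGroup E] {f : ℝ → E}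
    {a b : ℝ} (hb : 0 < b) (hf : ContinuousOn f (Ici a))
    (ho : f =O[atTop] fun x => Real.exp (-b * x)) : IntegrableOn f (Ioi a) :=
  (integrableOn_Ici_iff_integrableOn_Ioi (by finiteness)).mp <|
    (hf.locallyIntegrableOn measurableSet_Ici).integrableOn_of_isBigO_atTop
      ho ⟨Ioi b, Ioi_mem_atTop b, exp_neg_integrableOn_Ioi b hb⟩

theorem isBigO_cexp_mul_pow {μ : ℂ} {ε : ℝ} (hμ : μ.re < -ε) (i : ℕ) :
    (fun t : ℝ => Complex.exp (t * μ) * (t : ℂ) ^ i) =O[atTop] fun t => Real.exp (-ε * t) := by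
  have hexp : (fun t : ℝ => Complex.exp (t * μ)) =O[atTop] fun t => Real.exp (μ.re * t) :=
    isBigO_of_le _ fun t => by simp [Complex.norm_exp, mul_comm]
  have hpow : (fun t : ℝ => (t : ℂ) ^ i) =O[atTop] fun t => Real.exp ((-ε - μ.re) * t) :=
    (isBigO_of_le atTop fun t : ℝ => (by simp : ‖(t : ℂ) ^ i‖ ≤ ‖t ^ i‖)).trans
      (isLittleO_pow_exp_pos_mul_atTop i (by linarith : 0 < -ε - μ.re)).isBigO
  refine (hexp.mul hpow).congr_right fun t => ?_
  rw [← Real.exp_add]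
  ring_nf

namespace Matrix

variable {n : Type*} [Fintype n]

section RCLike

variable {𝕜 : Type*} [RCLike 𝕜]

theorem isClosed_setOf_posSemidef : IsClosed {A : Matrix n n 𝕜 | A.PosSemidef} := by
  simp only [posSemidef_iff_dotProduct_mulVec, ofPred_and, ofPred_forall]
  exact (isClosed_eq continuous_id.matrix_conjTranspose continuous_id).inter <|
    isClosed_iInter fun x => isClosed_le continuous_const <|
      continuous_const.dotProduct (continuous_id.matrix_mulVec continuous_const)

open scoped MatrixOrder in
theorem posSemidef_setIntegral {α : Type*} [MeasurableSpace α] {μ : Measure α} {s : Set α}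
    (hs : MeasurableSet s) {f : α → Matrix n n 𝕜} (hf : ∀ x ∈ s, (f x).PosSemidef) :
    (∫ x in s, f x ∂μ).PosSemidef := by
  -- `∫` uses the topology of the sup norm, which is not reducibly the product topology that
  -- `ClosedIciTopology (Matrix n n 𝕜)` would pick up.
  have : @ClosedIciTopology (Matrix n n 𝕜) PseudoMetricSpace.toUniformSpace.toTopologicalSpace _ :=
    ⟨fun A => isClosed_setOf_posSemidef.preimage (continuous_id.sub continuous_const)⟩
  exact nonneg_iff_posSemidef.mp <| integral_nonneg_of_ae <|
    (ae_restrict_iff' hs).mpr <| ae_of_all _ fun x hx => nonneg_iff_posSemidef.mpr (hf x hx)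

theorem isBoundedBilinearMap_mul :
    IsBoundedBilinearMap 𝕜 fun p : Matrix n n 𝕜 × Matrix n n 𝕜 => p.1 * p.2 :=
  ContinuousLinearMap.isBoundedBilinearMap <| LinearMap.toContinuousLinearMap <|
    LinearMap.toContinuousLinearMap.toLinearMap ∘ₗ LinearMap.mul 𝕜 (Matrix n n 𝕜)

theorem _root_.Asymptotics.IsBigO.matrix_mul {α : Type*} {l : Filter α} {f g : α → Matrix n n 𝕜}
    {u v : α → ℝ} (hf : f =O[l] u) (hg : g =O[l] v) :
    (fun x => f x * g x) =O[l] fun x => u x * v x :=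
  isBoundedBilinearMap_mul.isBigO_comp.trans (hf.norm_left.mul hg.norm_left)

theorem exp_mulVec_eq_sum_of_pow_mulVec_eq_zero [DecidableEq n] {N : Matrix n n 𝕜} {y : n → 𝕜}
    {k : ℕ} (hy : N ^ k *ᵥ y = 0) :
    exp N *ᵥ y = ∑ i ∈ Finset.range k, (i ! : 𝕜)⁻¹ • (N ^ i *ᵥ y) := by
  have hexp : HasSum (fun i => (i ! : 𝕜)⁻¹ • N ^ i) (exp N) :=
    open scoped Norms.Operator in exp_series_hasSum_exp' N
  have hsum : HasSum (fun i => ((i ! : 𝕜)⁻¹ • N ^ i) *ᵥ y) (exp N *ᵥ y) :=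
    hexp.map (mulVec.addMonoidHomLeft y) (continuous_id.matrix_mulVec continuous_const)
  simp only [smul_mulVec] at hsum
  refine hsum.unique (hasSum_sum_of_ne_finset_zero fun i hi => ?_)
  rw [Finset.mem_range, not_lt] at hi
  rw [← Nat.sub_add_cancel hi, pow_add, ← mulVec_mulVec, hy, mulVec_zero, smul_zero]

end RCLike

variable [DecidableEq n]

theorem exp_smul_one (c : ℂ) : exp (c • (1 : Matrix n n ℂ)) = Complex.exp c • 1 := by
  rw [← Algebra.algebraMap_eq_smul_one, ← Algebra.algebraMap_eq_smul_one, Complex.exp_eq_exp_ℂ]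
  exact open scoped Norms.Operator in (algebraMap_exp_comm (𝔸 := Matrix n n ℂ) c).symm

variable (A : Matrix n n ℂ)

theorem exp_smul_mulVec_eq_sum {μ : ℂ} {k : ℕ} {y : n → ℂ} (hy : (A - μ • 1) ^ k *ᵥ y = 0)
    (c : ℂ) :
    exp (c • A) *ᵥ y
      = ∑ i ∈ Finset.range k, (Complex.exp (c * μ) * c ^ i / i !) • ((A - μ • 1) ^ i *ᵥ y) := by
  have hsplit : c • A = (c * μ) • (1 : Matrix n n ℂ) + c • (A - μ • 1) := by
    rw [smul_sub, smul_smul, add_sub_cancel]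
  have hcy : (c • (A - μ • 1)) ^ k *ᵥ y = 0 := by rw [smul_pow, smul_mulVec, hy, smul_zero]
  rw [hsplit, exp_add_of_commute _ _ ((Commute.one_left _).smul_left _), exp_smul_one,
    smul_mul_assoc, one_mul, smul_mulVec, exp_mulVec_eq_sum_of_pow_mulVec_eq_zero hcy,
    Finset.smul_sum]
  refine Finset.sum_congr rfl fun i _ => ?_
  rw [smul_pow, smul_mulVec, smul_smul, smul_smul]
  ring_nf

variable {ε : ℝ}

theorem isBigO_exp_smul_mulVec_of_pow_mulVec_eq_zero {μ : ℂ} (hμ : μ.re < -ε) {k : ℕ}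
    {y : n → ℂ} (hy : (A - μ • 1) ^ k *ᵥ y = 0) :
    (fun t : ℝ => exp (t • A) *ᵥ y) =O[atTop] fun t => Real.exp (-ε * t) := by
  simp_rw [← Complex.coe_smul, exp_smul_mulVec_eq_sum A hy]
  refine IsBigO.fun_sum fun i _ => ?_
  have hterm := (isBigO_cexp_mul_pow hμ i).smul
    (isBigO_const_const ((i ! : ℂ)⁻¹ • ((A - μ • 1) ^ i *ᵥ y)) (one_ne_zero (α := ℝ)) atTop)
  refine (hterm.congr_left fun t => ?_).congr_right fun t => ?_
  · rw [smul_smul, div_eq_mul_inv]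
  · rw [smul_eq_mul, mul_one]

theorem isBigO_exp_smul_mulVec (hε : ∀ μ ∈ spectrum ℂ A, μ.re < -ε) (x : n → ℂ) :
    (fun t : ℝ => exp (t • A) *ᵥ x) =O[atTop] fun t => Real.exp (-ε * t) := by
  -- The vectors along which `exp (t • A)` decays form a submodule containing every generalized
  -- eigenspace.
  let S : Submodule ℂ (n → ℂ) :=
    { carrier := {x | (fun t : ℝ => exp (t • A) *ᵥ x) =O[atTop] fun t => Real.exp (-ε * t)}
      add_mem' := fun hx hy => by
        simp only [mem_ofPred_eq, mulVec_add] at *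
        exact hx.add hy
      zero_mem' := by
        simp only [mem_ofPred_eq, mulVec_zero]
        exact isBigO_zero _ _
      smul_mem' := fun c x hx => by
        simp only [mem_ofPred_eq, mulVec_smul] at *
        exact hx.const_smul_left c }
  suffices ⊤ ≤ S from this Submodule.mem_top
  rw [← Module.End.iSup_maxGenEigenspace_eq_top (toLin' A)]
  refine iSup_le fun μ y hy => ?_
  obtain ⟨k, hk⟩ := (Module.End.mem_maxGenEigenspace _ _ _).1 hy
  rcases eq_or_ne y 0 with rfl | hy0
  · exact S.zero_mem
  have hμ : μ ∈ spectrum ℂ A := by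
    rw [← spectrum_toLin']
    exact ((Module.End.hasUnifEigenvalue_iff_hasUnifEigenvalue_one (by simp)).1
      ((Submodule.ne_bot_iff _).2 ⟨y, hy, hy0⟩)).mem_spectrum
  have hlin : toLin' A - μ • 1 = toLin' (A - μ • 1) := by
    rw [map_sub, map_smul, toLin'_one, Module.End.one_eq_id]
  rw [hlin, ← toLin'_pow, toLin'_apply] at hk
  exact isBigO_exp_smul_mulVec_of_pow_mulVec_eq_zero A (hε μ hμ) hk

theorem isBigO_exp_smul (hε : ∀ μ ∈ spectrum ℂ A, μ.re < -ε) :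
    (fun t : ℝ => exp (t • A)) =O[atTop] fun t => Real.exp (-ε * t) := by
  refine isBigO_pi.2 fun i => isBigO_pi.2 fun j => ?_
  simpa [mulVec_single_one] using isBigO_pi.1 (isBigO_exp_smul_mulVec A hε (Pi.single j 1)) i

theorem exists_pos_forall_re_lt_neg (hA : ∀ μ ∈ spectrum ℂ A, μ.re < 0) :
    ∃ ε > 0, ∀ μ ∈ spectrum ℂ A, μ.re < -ε := by
  have hevent : ∀ᶠ ε in 𝓝[>] (0 : ℝ), ∀ μ ∈ spectrum ℂ A, μ.re < -ε :=
    A.finite_spectrum.eventually_all.2 fun μ hμ => nhdsWithin_le_nhds <|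
      (tendsto_neg (0 : ℝ)).eventually_const_lt (by simpa using hA μ hμ)
  obtain ⟨ε, hε, hpos⟩ := (hevent.and self_mem_nhdsWithin).exists
  exact ⟨ε, hpos, hε⟩

theorem hasDerivAt_exp_smul_mul_mul_conjTranspose (R : Matrix n n ℂ) (t : ℝ) :
    HasDerivAt (fun s : ℝ => exp (s • A) * R * (exp (s • A))ᴴ)
      (exp (t • A) * (A * R + R * Aᴴ) * (exp (t • A))ᴴ) t := by
  have hstar : ∀ s : ℝ, (exp (s • A))ᴴ = exp (s • Aᴴ) := fun s => by
    rw [← exp_conjTranspose, conjTranspose_smul, star_trivial]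
  simp only [hstar]
  -- `HasDerivAt` only sees the topology, so the product rule may be used for the operator norm.
  have h : HasDerivAt (fun s : ℝ => exp (s • A) * R * exp (s • Aᴴ))
      (exp (t • A) * A * R * exp (t • Aᴴ) + exp (t • A) * R * (Aᴴ * exp (t • Aᴴ))) t :=
    open scoped Norms.Operator in
    ((hasDerivAt_exp_smul_const A t).mul_const R).mul (hasDerivAt_exp_smul_const' Aᴴ t)
  convert h using 1
  noncomm_ring

theorem isBigO_exp_smul_mul_mul_conjTranspose (hε : ∀ μ ∈ spectrum ℂ A, μ.re < -ε)
    (R : Matrix n n ℂ) :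
    (fun t : ℝ => exp (t • A) * R * (exp (t • A))ᴴ) =O[atTop]
      fun t => Real.exp (-(2 * ε) * t) := by
  have hexp := isBigO_exp_smul A hε
  have hexpH : (fun t : ℝ => (exp (t • A))ᴴ) =O[atTop] fun t => Real.exp (-ε * t) :=
    (hexp.norm_left.congr_left fun t => (norm_conjTranspose _).symm).of_norm_left
  refine ((hexp.matrix_mul (isBigO_const_const R one_ne_zero atTop)).matrix_mul hexpH).congr_right
    fun t => ?_
  rw [mul_one, ← Real.exp_add]
  ring_nf

theorem continuous_exp_smul_mul_mul_conjTranspose (R : Matrix n n ℂ) :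
    Continuous fun t : ℝ => exp (t • A) * R * (exp (t • A))ᴴ :=
  continuous_iff_continuousAt.2 fun t =>
    (hasDerivAt_exp_smul_mul_mul_conjTranspose A R t).continuousAt

variable {A}

theorem setIntegral_Ioi_exp_smul_mul_mul_conjTranspose_shift (hA : ∀ μ ∈ spectrum ℂ A, μ.re < 0)
    (Q R : Matrix n n ℂ) :
    ∫ t in Ioi (0 : ℝ), exp (t • A) * (Q - R * Aᴴ - A * R) * (exp (t • A))ᴴ
      = (∫ t in Ioi (0 : ℝ), exp (t • A) * Q * (exp (t • A))ᴴ) + R := by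
  obtain ⟨ε, hε, hspec⟩ := exists_pos_forall_re_lt_neg A hA
  have h2ε : 0 < 2 * ε := by positivity
  have hint := fun S => integrableOn_Ioi_of_isBigO_exp_neg (a := 0) h2ε
    (continuous_exp_smul_mul_mul_conjTranspose A S).continuousOn
    (isBigO_exp_smul_mul_mul_conjTranspose A hspec S)
  have hlim := (isBigO_exp_smul_mul_mul_conjTranspose A hspec R).trans_tendsto <|
    Real.tendsto_exp_atBot.comp (tendsto_id.const_mul_atTop_of_neg (neg_neg_of_pos h2ε))
  have hFTC := integral_Ioi_of_hasDerivAt_of_tendsto'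
    (fun t _ => hasDerivAt_exp_smul_mul_mul_conjTranspose A R t) (hint _) hlim
  simp only [zero_smul, exp_zero, one_mul, conjTranspose_one, mul_one, zero_sub] at hFTC
  rw [← sub_neg_eq_add, ← hFTC, ← integral_sub (hint Q) (hint _)]
  congr 1
  funext t
  noncomm_ring

end Matrix

theorem lyapunovSolution_add_posSemidef_general {m : ℕ} (A Q Ξ : Matrix (Fin m) (Fin m) ℂ)
    (hA : IsAsymptoticallyStable A)
    (hshift : (Q - Ξ * Aᴴ - A * Ξ).PosSemidef) :
    (lyapunovSolution Q A + Ξ).PosSemidef := by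
  rw [lyapunovSolution, integral_Ici_eq_integral_Ioi,
    ← setIntegral_Ioi_exp_smul_mul_mul_conjTranspose_shift hA]
  exact posSemidef_setIntegral measurableSet_Ioi fun t _ => hshift.mul_mul_conjTranspose_same _

/-- If `A` is asymptotically stable, `Q` and `Ξ` are Hermitian, and
`Q_[Ξ] := Q − Ξ Aᴴ − A Ξ` is positive semidefinite, then `P(Q,A) + Ξ` is
positive semidefinite. -/
theorem lyapunovSolution_add_posSemidef {m : ℕ} (A Q Ξ : Matrix (Fin m) (Fin m) ℂ)
    (hA : IsAsymptoticallyStable A) (hQ : Q.IsHermitian) (hΞ : Ξ.IsHermitian)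
    (hshift : (Q - Ξ * Aᴴ - A * Ξ).PosSemidef) :
    (lyapunovSolution Q A + Ξ).PosSemidef :=
  lyapunovSolution_add_posSemidef_general A Q Ξ hA hshift
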